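/- For any n ≥ 1 and natural numbers a ≥ b ≥ 1, the sum a^n + ∑_{t=1}^{⌊n/2⌋} (n/(n-t)) · C(n - t, t) · b^t · a^{n - 2t} equals V_n(a, -b), the n-th term of the Lucas sequence of the second kind with parameters (a, -b). -/

import Mathlib

/-!
With `Q = -b`, the Lucas sequences satisfy `V n = U (n + 1) + b * U (n - 1)`, and
`U (n + 1) (a, -b) = ∑ t, C(n - t, t) * b ^ t * a ^ (n - 2 t)` (tilings of a path of length `n`
by monomers of weight `a` and dimers of weight `b`). The coefficient `n / (n - t) * C(n - t, t)`
splits as `C(n - t, t) + C(n - t - 1, t - 1)`, and the two resulting sums are exactly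
`U (n + 1)` and `b * U (n - 1)`.
-/

/-- Lucas sequence of the first kind: `U 0 = 0`, `U 1 = 1`,
`U (n+2) = P * U (n+1) - Q * U n`. -/
def lucasU (P Q : ℤ) : ℕ → ℤ
  | 0 => 0
  | 1 => 1
  | n + 2 => P * lucasU P Q (n + 1) - Q * lucasU P Q n

/-- Lucas sequence of the second kind: `V 0 = 2`, `V 1 = P`,
`V (n+2) = P * V (n+1) - Q * V n`. -/
def lucasV (P Q : ℤ) : ℕ → ℤ
  | 0 => 2
  | 1 => P
  | n + 2 => P * lucasV P Q (n + 1) - Q * lucasV P Q n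

open Finset

theorem choose_succ_mul_pow_sub_mul {R : Type*} [Semiring R] (a : R) (i j : ℕ) :
    (i.choose (j + 1) : R) * a ^ (i - (j + 1)) * a = i.choose (j + 1) * a ^ (i - j) := by
  rcases lt_or_ge i (j + 1) with h | h
  · simp [Nat.choose_eq_zero_of_lt h]
  · rw [mul_assoc, ← pow_succ, show i - (j + 1) + 1 = i - j by omega]

/- The division is exact: `t * C(m, t) = m * C(m - 1, t - 1)` with `m = n - t`. -/
theorem mul_choose_sub_div_sub_eq_add (n t : ℕ) (ht : 0 < t) (htn : t < n) :
    n * (n - t).choose t / (n - t) = (n - t).choose t + (n - t - 1).choose (t - 1) := by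
  obtain ⟨m, hm⟩ : ∃ m, n - t = m + 1 := ⟨n - t - 1, by omega⟩
  have hpascal := Nat.add_one_mul_choose_eq m (t - 1)
  rw [Nat.sub_add_cancel ht] at hpascal
  have : n * (m + 1).choose t = (m + 1) * ((m + 1).choose t + m.choose (t - 1)) := by
    rw [mul_add, hpascal, show n = m + 1 + t by omega]
    ring
  rw [hm, this, Nat.mul_div_cancel_left _ m.succ_pos, Nat.add_sub_cancel]

theorem sum_Icc_one_eq_sum_range {M : Type*} [AddCommMonoid M] (f : ℕ → M) (N : ℕ) :
    ∑ t ∈ Icc 1 N, f t = ∑ t ∈ range N, f (t + 1) := by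
  rw [range_eq_Ico, sum_Ico_add' f 0 N 1, zero_add, Ico_add_one_right_eq_Icc]

section Lucas

variable (P Q : ℤ)

theorem lucasV_add_one (n : ℕ) :
    lucasV P Q (n + 1) = lucasU P Q (n + 2) - Q * lucasU P Q n := by
  induction n using Nat.twoStepInduction with
  | zero => simp [lucasV, lucasU]
  | one => simp [lucasV, lucasU]; ring
  | more n ih₀ ih₁ =>
    rw [lucasV.eq_3, ih₀, ih₁, lucasU.eq_3 _ _ (n + 2), lucasU.eq_3 _ _ (n + 1),
      lucasU.eq_3 _ _ n]
    ring

theorem lucasU_add_one_eq_sum_antidiagonal (n : ℕ) :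
    lucasU P Q (n + 1) =
      ∑ p ∈ antidiagonal n, (p.1.choose p.2 : ℤ) * (-Q) ^ p.2 * P ^ (p.1 - p.2) := by
  induction n using Nat.twoStepInduction with
  | zero => simp [lucasU]
  | one => simp [lucasU, Nat.antidiagonal_succ]
  | more n ih₀ ih₁ =>
    rw [lucasU.eq_3, ih₀, ih₁, Nat.antidiagonal_succ_succ', Nat.antidiagonal_succ' n]
    simp only [sum_cons, sum_map, Function.Embedding.coe_prodMap, Function.Embedding.coeFn_mk,
      Function.Embedding.refl_apply, Prod.map_fst, Prod.map_snd, Nat.choose_zero_succ,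
      Nat.choose_zero_right, Nat.cast_zero, zero_mul, zero_add, Nat.sub_zero,
      Nat.succ_sub_succ, Nat.succ_eq_add_one, Nat.choose_succ_succ, Nat.cast_add]
    rw [mul_add, add_sub_assoc, mul_sum, mul_sum, ← sum_sub_distrib]
    congr 1
    · ring
    refine sum_congr rfl fun p _ => ?_
    linear_combination (-Q) ^ (p.2 + 1) * choose_succ_mul_pow_sub_mul P p.1 p.2

theorem lucasU_add_one_eq_sum_range_half (n : ℕ) :
    lucasU P Q (n + 1) =
      ∑ t ∈ range (n / 2 + 1), ((n - t).choose t : ℤ) * (-Q) ^ t * P ^ (n - 2 * t) := by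
  rw [lucasU_add_one_eq_sum_antidiagonal, ← Nat.sum_antidiagonal_swap,
    Nat.sum_antidiagonal_eq_sum_range_succ_mk]
  simp only [Prod.swap_prod_mk, Nat.sub_sub, ← two_mul]
  refine (sum_subset (range_subset_range.2 (by omega)) fun t ht ht' => ?_).symm
  simp only [mem_range] at ht ht'
  simp [Nat.choose_eq_zero_of_lt (by omega : n - t < t)]

theorem lucasU_add_one_eq_pow_add_sum_Icc (n : ℕ) :
    lucasU P Q (n + 1) =
      P ^ n + ∑ t ∈ Icc 1 (n / 2), ((n - t).choose t : ℤ) * (-Q) ^ t * P ^ (n - 2 * t) := by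
  rw [lucasU_add_one_eq_sum_range_half, sum_range_succ', sum_Icc_one_eq_sum_range, add_comm]
  simp

theorem neg_mul_lucasU_eq_sum_Icc (m : ℕ) :
    -Q * lucasU P Q m = ∑ t ∈ Icc 1 ((m + 1) / 2),
      ((m - t).choose (t - 1) : ℤ) * (-Q) ^ t * P ^ (m + 1 - 2 * t) := by
  rcases m with _ | k
  · simp [lucasU]
  rw [lucasU_add_one_eq_sum_range_half, sum_Icc_one_eq_sum_range, mul_sum,
    show (k + 1 + 1) / 2 = k / 2 + 1 by omega]
  refine sum_congr rfl fun t _ => ?_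
  rw [show k + 1 - (t + 1) = k - t by omega, show k + 1 + 1 - 2 * (t + 1) = k - 2 * t by omega]
  simp only [add_tsub_cancel_right]
  ring

end Lucas

theorem sum_cycle_terms_eq_lucasV_general (n a b : ℕ) (hn : 1 ≤ n) :
    (a : ℤ) ^ n + ∑ t ∈ Finset.Icc 1 (n / 2),
        (((n * (n - t).choose t / (n - t) : ℕ)) : ℤ) * (b : ℤ) ^ t * (a : ℤ) ^ (n - 2 * t)
      = lucasV (a : ℤ) (-(b : ℤ)) n := by
  obtain ⟨m, rfl⟩ : ∃ m, n = m + 1 := ⟨n - 1, by omega⟩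
  have hsplit : ∀ t ∈ Icc 1 ((m + 1) / 2),
      (((m + 1) * (m + 1 - t).choose t / (m + 1 - t) : ℕ) : ℤ) * b ^ t * a ^ (m + 1 - 2 * t) =
        ((m + 1 - t).choose t : ℤ) * b ^ t * a ^ (m + 1 - 2 * t) +
          ((m - t).choose (t - 1) : ℤ) * b ^ t * a ^ (m + 1 - 2 * t) := fun t ht => by
    rw [mem_Icc] at ht
    rw [mul_choose_sub_div_sub_eq_add _ _ ht.1 (by omega), show m + 1 - t - 1 = m - t by omega]
    push_cast
    ring
  rw [sum_congr rfl hsplit, sum_add_distrib, ← add_assoc, lucasV_add_one,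
    lucasU_add_one_eq_pow_add_sum_Icc, sub_eq_add_neg, ← neg_mul, neg_mul_lucasU_eq_sum_Icc,
    neg_neg]

theorem sum_cycle_terms_eq_lucasV (n a b : ℕ) (hn : 1 ≤ n) (hb : 1 ≤ b) (hab : b ≤ a) :
    (a : ℤ) ^ n + ∑ t ∈ Finset.Icc 1 (n / 2),
        (((n * (n - t).choose t / (n - t) : ℕ)) : ℤ) * (b : ℤ) ^ t * (a : ℤ) ^ (n - 2 * t)
      = lucasV (a : ℤ) (-(b : ℤ)) n :=
  sum_cycle_terms_eq_lucasV_general n a b hn
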